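/- arXiv:0706.0309 — 5 statements merged into one kernel-verified Lean document; each statement's English description precedes it below -/
import Mathlib

section
/- Let G be a finite connected simple graph with maximum degree Δ ≥ 2. Then the decycling number of G satisfies ∇(G) ≥ (|E(G)| − |V(G)| + 1)/(Δ − 1); equivalently, every decycling set S of G satisfies (Δ − 1)·|S| ≥ |E(G)| − |V(G)| + 1. -/
/-!
Delete a decycling set `S` from `G`. The edges that survive lie in the forest `G[V \ S]`, so
there are at most `|V| - |S| - 1` of them, while each vertex of `S` kills at most `Δ` edges.
Hence `|E| ≤ |V| - |S| - 1 + Δ |S|`. When `S = V` the forest is empty and the handshake lemma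
`2 |E| ≤ Δ |V|` takes its place.
-/

open SimpleGraph

/-- `S` is a decycling set of `G` if the subgraph of `G` induced on the complement of `S`
is acyclic. -/
def SimpleGraph.IsDecyclingSet {V : Type*} (G : SimpleGraph V) (S : Set V) : Prop :=
  (G.induce Sᶜ).IsAcyclic

/-- The decycling number `∇(G)` of `G`: the minimum cardinality of a decycling set of `G`. -/
noncomputable def SimpleGraph.decyclingNumber {V : Type*} (G : SimpleGraph V) : ℕ :=
  sInf {k | ∃ S : Set V, G.IsDecyclingSet S ∧ S.ncard = k}

open Finset

namespace SimpleGraph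

theorem IsAcyclic.card_edgeFinset_add_one_le {V : Type*} [Fintype V] [Nonempty V]
    {H : SimpleGraph V} [Fintype H.edgeSet] (hH : H.IsAcyclic) :
    #H.edgeFinset + 1 ≤ Fintype.card V := by
  classical
  obtain ⟨T, hHT, -, hT⟩ := connected_top.exists_isTree_le_of_le_of_isAcyclic le_top hH
  rw [← hT.card_edgeFinset]
  gcongr

theorem isDecyclingSet_univ {V : Type*} (G : SimpleGraph V) : G.IsDecyclingSet Set.univ :=
  fun v _ => absurd v.2 (by simp)

theorem exists_isDecyclingSet_ncard_eq_decyclingNumber {V : Type*} (G : SimpleGraph V) :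
    ∃ S, G.IsDecyclingSet S ∧ S.ncard = G.decyclingNumber :=
  Nat.sInf_mem (s := {k | ∃ S : Set V, G.IsDecyclingSet S ∧ S.ncard = k})
    ⟨_, Set.univ, G.isDecyclingSet_univ, rfl⟩

variable {V : Type*} [Fintype V] (G : SimpleGraph V) [DecidableRel G.Adj]

theorem sum_degree_le_card_mul_maxDegree (s : Finset V) :
    ∑ v ∈ s, G.degree v ≤ #s * G.maxDegree := by
  rw [← smul_eq_mul]
  exact sum_le_card_nsmul _ _ _ fun v _ => G.degree_le_maxDegree v

theorem card_edgeFinset_add_one_le_card_mul_maxDegree (hΔ : 2 ≤ G.maxDegree) :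
    #G.edgeFinset + 1 ≤ Fintype.card V * G.maxDegree := by
  have : Nonempty V := by
    contrapose! hΔ
    simp [maxDegree_of_subsingleton]
  have hhandshake : 2 * #G.edgeFinset ≤ Fintype.card V * G.maxDegree := by
    rw [← sum_degrees_eq_twice_card_edges, ← card_univ]
    exact G.sum_degree_le_card_mul_maxDegree univ
  have : 2 ≤ Fintype.card V * G.maxDegree := hΔ.trans (Nat.le_mul_of_pos_left _ Fintype.card_pos)
  omega

theorem card_edgeFinset_le_card_edgeFinset_induce_add_sum_degree [DecidableEq V]
    (s : Finset V) :
    #G.edgeFinset ≤ #(G.induce (s : Set V)ᶜ).edgeFinset + ∑ v ∈ s, G.degree v := by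
  have hcover : G.edgeFinset ⊆
      (G.induce (s : Set V)ᶜ).edgeFinset.image (Sym2.map Subtype.val) ∪
        s.biUnion (fun v => G.incidenceFinset v) := by
    intro e he
    induction e with
    | h a b =>
      have hab : G.Adj a b := by simpa using he
      by_cases ha : a ∈ s
      · exact mem_union_right _ (mem_biUnion.2 ⟨a, ha, by simpa [mem_incidenceFinset] using hab⟩)
      by_cases hb : b ∈ s
      · exact mem_union_right _ (mem_biUnion.2 ⟨b, hb, by
          simpa [mem_incidenceFinset, mk'_mem_incidenceSet_iff] using hab⟩)
      have ha' : a ∈ (s : Set V)ᶜ := by simpa using ha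
      have hb' : b ∈ (s : Set V)ᶜ := by simpa using hb
      refine mem_union_left _ (mem_image.2 ⟨s(⟨a, ha'⟩, ⟨b, hb'⟩), ?_, Sym2.map_mk _ _ _⟩)
      simpa using hab
  calc #G.edgeFinset
      ≤ #((G.induce (s : Set V)ᶜ).edgeFinset.image (Sym2.map Subtype.val)) +
          #(s.biUnion fun v => G.incidenceFinset v) :=
        (card_le_card hcover).trans (card_union_le _ _)
    _ ≤ #(G.induce (s : Set V)ᶜ).edgeFinset + ∑ v ∈ s, #(G.incidenceFinset v) :=
        add_le_add card_image_le card_biUnion_le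
    _ = #(G.induce (s : Set V)ᶜ).edgeFinset + ∑ v ∈ s, G.degree v := by
        simp only [card_incidenceFinset_eq_degree]

variable {G}

theorem IsDecyclingSet.card_edgeFinset_add_card_add_one_le (hΔ : 2 ≤ G.maxDegree)
    {s : Finset V} (hs : G.IsDecyclingSet s) :
    #G.edgeFinset + #s + 1 ≤ Fintype.card V + #s * G.maxDegree := by
  classical
  obtain hempty | hne := sᶜ.eq_empty_or_nonempty
  · have hcard : #s = Fintype.card V := by
      rw [← card_univ, ← (compl_eq_empty_iff s).1 hempty]
    have := G.card_edgeFinset_add_one_le_card_mul_maxDegree hΔ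
    rw [hcard]
    omega
  · have : Nonempty ((s : Set V)ᶜ : Set V) := by
      rw [← coe_compl]
      exact hne.coe_sort
    have hforest := IsAcyclic.card_edgeFinset_add_one_le hs
    rw [← Set.toFinset_card, Set.toFinset_compl, toFinset_coe] at hforest
    have := G.card_edgeFinset_le_card_edgeFinset_induce_add_sum_degree s
    have := G.sum_degree_le_card_mul_maxDegree s
    have := card_compl_add_card s
    omega

end SimpleGraph

theorem decyclingNumber_lower_bound_general {V : Type*} [Fintype V]
    (G : SimpleGraph V) [DecidableRel G.Adj] (hΔ : 2 ≤ G.maxDegree) :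
    ((G.decyclingNumber : ℚ) ≥
        ((G.edgeFinset.card : ℚ) - (Fintype.card V : ℚ) + 1) / ((G.maxDegree : ℚ) - 1)) ∧
    ∀ S : Set V, G.IsDecyclingSet S →
      ((G.maxDegree : ℤ) - 1) * (S.ncard : ℤ) ≥
        (G.edgeFinset.card : ℤ) - (Fintype.card V : ℤ) + 1 := by
  have bound : ∀ S : Set V, G.IsDecyclingSet S →
      (#G.edgeFinset : ℤ) - Fintype.card V + 1 ≤ (G.maxDegree - 1) * S.ncard := by
    intro S hS
    obtain ⟨s, rfl⟩ := S.toFinite.exists_finset_coe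
    have := hS.card_edgeFinset_add_card_add_one_le hΔ
    rw [Set.ncard_coe_finset]
    zify at this
    linarith
  refine ⟨?_, bound⟩
  obtain ⟨S, hS, hcard⟩ := G.exists_isDecyclingSet_ncard_eq_decyclingNumber
  have hpos : (0 : ℚ) < G.maxDegree - 1 := by
    have : (2 : ℚ) ≤ G.maxDegree := by exact_mod_cast hΔ
    linarith
  rw [ge_iff_le, div_le_iff₀ hpos, ← hcard, mul_comm]
  exact_mod_cast bound S hS

/-- For a finite connected simple graph `G` with maximum degree `Δ ≥ 2`, the decycling number
satisfies `∇(G) ≥ (|E(G)| − |V(G)| + 1)/(Δ − 1)`; equivalently, every decycling set `S` of `G`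
satisfies `(Δ − 1)·|S| ≥ |E(G)| − |V(G)| + 1`. -/
theorem decyclingNumber_lower_bound {V : Type*} [Fintype V] [DecidableEq V]
    (G : SimpleGraph V) [DecidableRel G.Adj] (hconn : G.Connected) (hΔ : 2 ≤ G.maxDegree) :
    ((G.decyclingNumber : ℚ) ≥
        ((G.edgeFinset.card : ℚ) - (Fintype.card V : ℚ) + 1) / ((G.maxDegree : ℚ) - 1)) ∧
    ∀ S : Set V, G.IsDecyclingSet S →
      ((G.maxDegree : ℤ) - 1) * (S.ncard : ℤ) ≥
        (G.edgeFinset.card : ℤ) - (Fintype.card V : ℤ) + 1 :=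
  decyclingNumber_lower_bound_general G hΔ
end

section
/- For every n ≥ 3, the decycling number of the Cartesian product C₃ □ Cₙ satisfies ∇(C₃ □ Cₙ) ≥ n + 1. -/
open SimpleGraph

/-!
`C₃ □ Cₙ` is 4-regular with `3n` vertices and `6n` edges. If `S` is a decycling set with
`s` elements, every edge either meets `S` (at most `4s` edges) or lies in the forest induced
on the `3n - s` remaining vertices (at most `3n - s - 1` edges). Hence `6n ≤ 3n + 3s - 1`,
i.e. `s ≥ n + 1`.
-/

open Finset

namespace SimpleGraph

variable {V : Type*} {G : SimpleGraph V}

theorem IsAcyclic.card_edgeFinset_lt_card [Fintype V] [Nonempty V] [Fintype G.edgeSet]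
    (hG : G.IsAcyclic) : #G.edgeFinset < Fintype.card V := by
  classical
  obtain ⟨T, hGT, -, hT⟩ := connected_top.exists_isTree_le_of_le_of_isAcyclic le_top hG
  rw [← hT.card_edgeFinset, Nat.lt_succ_iff]
  exact card_le_card (edgeFinset_mono hGT)

theorem card_edgeFinset_le_sum_degree_add_card_edgeFinset_induce_compl [Fintype V]
    [DecidableEq V] [Fintype G.edgeSet] [G.LocallyFinite] (S : Set V) [Fintype S]
    [Fintype (G.induce Sᶜ).edgeSet] :
    #G.edgeFinset ≤ ∑ v ∈ S.toFinset, G.degree v + #(G.induce Sᶜ).edgeFinset := by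
  have hcover : G.edgeFinset ⊆ S.toFinset.biUnion (G.incidenceFinset ·) ∪
      (G.induce Sᶜ).edgeFinset.map (Function.Embedding.subtype _).sym2Map := by
    intro e he
    induction e using Sym2.ind with
    | _ u v =>
      have huv : G.Adj u v := by simpa using he
      by_cases hu : u ∈ S
      · exact mem_union_left _ (mem_biUnion.2 ⟨u, by simpa, by simp [huv]⟩)
      by_cases hv : v ∈ S
      · exact mem_union_left _ (mem_biUnion.2 ⟨v, by simpa, by simp [incidenceSet, huv]⟩)
      exact mem_union_right _ (mem_map.2 ⟨s(⟨u, hu⟩, ⟨v, hv⟩), by simpa using huv, rfl⟩)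
  calc #G.edgeFinset
      ≤ #(S.toFinset.biUnion (G.incidenceFinset ·)) + #(G.induce Sᶜ).edgeFinset := by
        simpa using (card_le_card hcover).trans (card_union_le _ _)
    _ ≤ ∑ v ∈ S.toFinset, G.degree v + #(G.induce Sᶜ).edgeFinset := by
        gcongr
        exact card_biUnion_le.trans_eq (by simp only [card_incidenceFinset_eq_degree])

theorem IsRegularOfDegree.two_mul_card_edgeFinset [Fintype V] [G.LocallyFinite]
    [Fintype G.edgeSet] {d : ℕ} (hG : G.IsRegularOfDegree d) :
    2 * #G.edgeFinset = d * Fintype.card V := by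
  classical
  calc 2 * #G.edgeFinset = ∑ v, G.degree v := by convert G.sum_degrees_eq_twice_card_edges.symm
    _ = d * Fintype.card V := by simp [hG.degree_eq, mul_comm]

theorem IsRegularOfDegree.boxProd {W : Type*} {H : SimpleGraph W} [G.LocallyFinite]
    [H.LocallyFinite] [(G □ H).LocallyFinite] {a b : ℕ} (hG : G.IsRegularOfDegree a)
    (hH : H.IsRegularOfDegree b) : (G □ H).IsRegularOfDegree (a + b) := fun x => by
  rw [degree_boxProd, hG.degree_eq, hH.degree_eq]

theorem isRegularOfDegree_cycleGraph {n : ℕ} (hn : 3 ≤ n) [(cycleGraph n).LocallyFinite] :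
    (cycleGraph n).IsRegularOfDegree 2 := by
  obtain ⟨m, rfl⟩ : ∃ m, n = m + 3 := ⟨n - 3, by omega⟩
  intro v
  convert cycleGraph_degree_three_le

theorem isDecyclingSet_univ_s1 : G.IsDecyclingSet Set.univ := by
  intro v
  exact (Set.notMem_compl_iff.2 (Set.mem_univ _) v.2).elim

theorem le_decyclingNumber {k : ℕ} (h : ∀ S, G.IsDecyclingSet S → k ≤ S.ncard) :
    k ≤ G.decyclingNumber :=
  le_csInf ⟨_, _, isDecyclingSet_univ_s1, rfl⟩ fun _ ⟨S, hS, hk⟩ => hk ▸ h S hS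

theorem IsDecyclingSet.card_edgeFinset_add_ncard_lt [Fintype V] [Fintype G.edgeSet]
    [G.LocallyFinite] {d : ℕ} (hG : G.IsRegularOfDegree d) {S : Set V}
    (hS : G.IsDecyclingSet S) (hne : Sᶜ.Nonempty) :
    #G.edgeFinset + S.ncard < d * S.ncard + Fintype.card V := by
  classical
  have : Nonempty ↥Sᶜ := hne.to_subtype
  have hforest := hS.card_edgeFinset_lt_card
  have hcount := card_edgeFinset_le_sum_degree_add_card_edgeFinset_induce_compl (G := G) S
  have hcompl : Fintype.card ↥Sᶜ + S.ncard = Fintype.card V := by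
    rw [← Nat.card_eq_fintype_card, Nat.card_coe_set_eq, ← Nat.card_eq_fintype_card, add_comm]
    exact S.ncard_add_ncard_compl
  simp only [hG.degree_eq, sum_const, smul_eq_mul, ← Set.ncard_eq_toFinset_card'] at hcount
  rw [mul_comm] at hcount
  omega

end SimpleGraph

/-- For every `n ≥ 3`, `∇(C₃ □ Cₙ) ≥ n + 1`. -/
theorem decyclingNumber_C3_boxProd_Cn_ge (n : ℕ) (hn : 3 ≤ n) :
    n + 1 ≤ (cycleGraph 3 □ cycleGraph n).decyclingNumber := by
  classical
  have hreg : (cycleGraph 3 □ cycleGraph n).IsRegularOfDegree (2 + 2) :=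
    (isRegularOfDegree_cycleGraph le_rfl).boxProd (isRegularOfDegree_cycleGraph hn)
  have hcard : Fintype.card (Fin 3 × Fin n) = 3 * n := by simp
  have hedges := hreg.two_mul_card_edgeFinset
  refine le_decyclingNumber fun S hS => ?_
  rcases eq_or_ne S Set.univ with rfl | hne
  · rw [Set.ncard_univ, Nat.card_eq_fintype_card, hcard]
    omega
  · have := hS.card_edgeFinset_add_ncard_lt hreg (Set.nonempty_compl.2 hne)
    omega
end

section
/- For every n ≥ 3, there exists a decycling set of the Cartesian product C₃ □ Cₙ of cardinality n + 1; hence ∇(C₃ □ Cₙ) ≤ n + 1. -/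
/-!
Remove from column `j` of `C₃ □ Cₙ` the row `2 - j % 2`, and remove the vertex `(0, n - 1)`:
`n + 1` vertices. Each column keeps row `0` and row `1 + j % 2`, and the kept non-zero rows of
consecutive columns differ, so in the column-by-column order every kept vertex has at most one
kept neighbour before it (a wrap-around edge leads backwards only from column `n - 1`, where a
single vertex is kept). A graph with such an order is acyclic: the last vertex of a cycle has
two distinct earlier neighbours on it.
-/

open SimpleGraph

namespace SimpleGraph

theorem isAcyclic_of_injective_of_lt_adj_unique {V α : Type*} [LinearOrder α]
    {G : SimpleGraph V} (f : V → α) (hf : Function.Injective f)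
    (h : ∀ ⦃v u w⦄, G.Adj v u → G.Adj v w → f u < f v → f w < f v → u = w) :
    G.IsAcyclic := by
  classical
  intro v c hc
  obtain ⟨w, hw, hmax⟩ := c.support.toFinset.exists_max_image f ⟨v, by simp⟩
  rw [List.mem_toFinset] at hw
  set c' := c.rotate w hw
  have hc' : c'.IsCycle := hc.rotate hw
  have hmax' : ∀ x ∈ c'.support, x ≠ w → f x < f w := fun x hx hxw =>
    (hmax x (by simpa [c', Walk.mem_support_rotate_iff] using hx)).lt_of_ne (hf.ne hxw)
  have hnil := hc'.not_nil
  exact hc'.snd_ne_penultimate <| h (c'.adj_snd hnil) (c'.adj_penultimate hnil).symm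
    (hmax' _ (c'.getVert_mem_support 1) (c'.adj_snd hnil).ne')
    (hmax' _ (c'.getVert_mem_support _) (c'.adj_penultimate hnil).ne)

theorem cycleGraph_adj_iff_val {n : ℕ} {u v : Fin n} :
    (cycleGraph n).Adj u v ↔ u ≠ v ∧ ((u : ℕ) + 1 = v ∨ (v : ℕ) + 1 = u ∨
      (u : ℕ) + 1 = n ∧ (v : ℕ) = 0 ∨ (v : ℕ) + 1 = n ∧ (u : ℕ) = 0) := by
  rw [cycleGraph_adj', Ne, Fin.ext_iff]
  have := u.isLt
  have := v.isLt
  rcases lt_trichotomy u v with h | rfl | h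
  · rw [Fin.coe_sub_iff_lt.mpr h, Fin.sub_val_of_le h.le]
    rw [Fin.lt_def] at h
    omega
  · rw [Fin.sub_val_of_le le_rfl]
    omega
  · rw [Fin.coe_sub_iff_lt.mpr h, Fin.sub_val_of_le h.le]
    rw [Fin.lt_def] at h
    omega

theorem decyclingNumber_le_ncard {V : Type*} {G : SimpleGraph V} {S : Set V}
    (hS : G.IsDecyclingSet S) : G.decyclingNumber ≤ S.ncard :=
  Nat.sInf_le ⟨S, hS, rfl⟩

end SimpleGraph

def threeBoxCycleDecyclingSet (m : ℕ) : Set (Fin 3 × Fin (m + 1)) :=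
  insert (0, Fin.last m) (Set.range fun j : Fin (m + 1) => (⟨2 - j % 2, by omega⟩, j))

theorem mem_threeBoxCycleDecyclingSet_iff {m : ℕ} {p : Fin 3 × Fin (m + 1)} :
    p ∈ threeBoxCycleDecyclingSet m ↔
      (p.1 : ℕ) = 0 ∧ (p.2 : ℕ) = m ∨ (p.1 : ℕ) = 2 - p.2 % 2 := by
  simp only [threeBoxCycleDecyclingSet, Set.mem_insert_iff, Set.mem_range, Prod.ext_iff,
    Fin.ext_iff, Fin.val_last]
  constructor
  · rintro (h | ⟨j, hr, hj⟩)
    · exact .inl h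
    · exact .inr (by rw [← hr, ← hj])
  · rintro (h | h)
    · exact .inl h
    · exact .inr ⟨p.2, h.symm, rfl⟩

theorem ncard_threeBoxCycleDecyclingSet (m : ℕ) :
    (threeBoxCycleDecyclingSet m).ncard = m + 2 := by
  rw [threeBoxCycleDecyclingSet, Set.ncard_insert_of_notMem,
    Set.ncard_range_of_injective fun _ _ h => congrArg Prod.snd h,
    Nat.card_eq_fintype_card, Fintype.card_fin]
  rintro ⟨j, hj⟩
  simp only [Prod.ext_iff, Fin.ext_iff, Fin.val_last, Fin.val_zero] at hj
  omega

theorem isDecyclingSet_threeBoxCycleDecyclingSet (m : ℕ) :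
    (cycleGraph 3 □ cycleGraph (m + 1)).IsDecyclingSet (threeBoxCycleDecyclingSet m) := by
  refine isAcyclic_of_injective_of_lt_adj_unique
    (fun p : ↥(threeBoxCycleDecyclingSet m)ᶜ => 3 * (p.1.2 : ℕ) + p.1.1) ?_ ?_
  · rintro ⟨⟨r, j⟩, _⟩ ⟨⟨r', j'⟩, _⟩ h
    have := r.isLt
    have := r'.isLt
    simp only [Subtype.mk.injEq, Prod.mk.injEq, Fin.ext_iff] at h ⊢
    omega
  · rintro ⟨⟨r, j⟩, hv⟩ ⟨⟨r₁, j₁⟩, hu⟩ ⟨⟨r₂, j₂⟩, hw⟩ h₁ h₂ hlt₁ hlt₂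
    simp only [comap_adj, Function.Embedding.coe_subtype, boxProd_adj, cycleGraph_three_eq_top,
      top_adj, cycleGraph_adj_iff_val, Set.mem_compl_iff, mem_threeBoxCycleDecyclingSet_iff,
      Ne, Subtype.mk.injEq, Prod.mk.injEq, Fin.ext_iff] at hv hu hw h₁ h₂ hlt₁ hlt₂ ⊢
    omega

/-- For every `n ≥ 3`, there is a decycling set of `C₃ □ Cₙ` of cardinality `n + 1`;
hence `∇(C₃ □ Cₙ) ≤ n + 1`. -/
theorem decyclingNumber_C3_boxProd_Cn_le (n : ℕ) (hn : 3 ≤ n) :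
    (∃ S : Set (Fin 3 × Fin n), (cycleGraph 3 □ cycleGraph n).IsDecyclingSet S ∧
        S.ncard = n + 1) ∧
      (cycleGraph 3 □ cycleGraph n).decyclingNumber ≤ n + 1 := by
  obtain ⟨m, rfl⟩ : ∃ m, n = m + 1 := ⟨n - 1, by omega⟩
  have hS := isDecyclingSet_threeBoxCycleDecyclingSet m
  have hcard := ncard_threeBoxCycleDecyclingSet m
  exact ⟨⟨_, hS, hcard⟩, hcard ▸ decyclingNumber_le_ncard hS⟩
end

section
/- For every n ≥ 4, every decycling set of the Cartesian product C₄ □ Cₙ has cardinality at least ⌈3n/2⌉; that is, ∇(C₄ □ Cₙ) ≥ ⌈3n/2⌉. -/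
open SimpleGraph

lemma quad_not_acyclic {V : Type*} {G : SimpleGraph V} {a b c d : V}
    (hab : G.Adj a b) (hbc : G.Adj b c) (hcd : G.Adj c d) (hda : G.Adj d a)
    (hac : a ≠ c) (hbd : b ≠ d) : ¬ G.IsAcyclic := by
  intro h
  have h1 : a ≠ b := hab.ne
  have h2 : b ≠ c := hbc.ne
  have h3 : c ≠ d := hcd.ne
  have h4 : d ≠ a := hda.ne
  have h1' := h1.symm; have h2' := h2.symm; have h3' := h3.symm; have h4' := h4.symm
  have hac' := hac.symm; have hbd' := hbd.symm
  refine h (Walk.cons hab (Walk.cons hbc (Walk.cons hcd (Walk.cons hda Walk.nil)))) ?_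
  rw [Walk.cons_isCycle_iff]
  constructor
  · rw [Walk.isPath_def]
    simp only [Walk.support_cons, Walk.support_nil, List.nodup_cons, List.mem_cons,
      List.mem_singleton, List.not_mem_nil, not_false_iff, List.nodup_nil, and_true]
    aesop
  · simp only [Walk.edges_cons, Walk.edges_nil, List.mem_cons, List.not_mem_nil, or_false,
      Sym2.eq, Sym2.rel_iff', Prod.mk.injEq, Prod.swap_prod_mk]
    aesop

lemma hex_not_acyclic {V : Type*} {G : SimpleGraph V} {a b c d e f : V}
    (hab : G.Adj a b) (hbc : G.Adj b c) (hcd : G.Adj c d) (hde : G.Adj d e)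
    (hef : G.Adj e f) (hfa : G.Adj f a)
    (hac : a ≠ c) (had : a ≠ d) (hae : a ≠ e)
    (hbd : b ≠ d) (hbe : b ≠ e) (hbf : b ≠ f)
    (hce : c ≠ e) (hcf : c ≠ f) (hdf : d ≠ f) : ¬ G.IsAcyclic := by
  intro h
  have h1 : a ≠ b := hab.ne
  have h2 : b ≠ c := hbc.ne
  have h3 : c ≠ d := hcd.ne
  have h4 : d ≠ e := hde.ne
  have h5 : e ≠ f := hef.ne
  have h6 : f ≠ a := hfa.ne
  have h1' := h1.symm; have h2' := h2.symm; have h3' := h3.symm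
  have h4' := h4.symm; have h5' := h5.symm; have h6' := h6.symm
  have := hac.symm; have := had.symm; have := hae.symm; have := hbd.symm
  have := hbe.symm; have := hbf.symm; have := hce.symm; have := hcf.symm; have := hdf.symm
  refine h (Walk.cons hab (Walk.cons hbc (Walk.cons hcd (Walk.cons hde
    (Walk.cons hef (Walk.cons hfa Walk.nil)))))) ?_
  rw [Walk.cons_isCycle_iff]
  constructor
  · rw [Walk.isPath_def]
    simp only [Walk.support_cons, Walk.support_nil, List.nodup_cons, List.mem_cons,
      List.mem_singleton, List.not_mem_nil, not_false_iff, List.nodup_nil, and_true]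
    aesop
  · simp only [Walk.edges_cons, Walk.edges_nil, List.mem_cons, List.not_mem_nil, or_false,
      Sym2.eq, Sym2.rel_iff', Prod.mk.injEq, Prod.swap_prod_mk]
    aesop

variable {m : ℕ}

lemma vertAdj (i : Fin (m + 4)) : (cycleGraph (m + 4)).Adj i (i + 1) :=
  cycleGraph_adj.mpr (Or.inr (add_sub_cancel_left i 1))

lemma horizAdj {u v : Fin 4} (h : (cycleGraph 4).Adj u v) (j : Fin (m+4)) :
    (cycleGraph 4 □ cycleGraph (m+4)).Adj (u, j) (v, j) :=
  boxProd_adj.mpr (Or.inl ⟨h, rfl⟩)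

lemma vertAdj' (v : Fin 4) (i : Fin (m+4)) :
    (cycleGraph 4 □ cycleGraph (m+4)).Adj (v, i) (v, i + 1) :=
  boxProd_adj.mpr (Or.inr ⟨vertAdj i, rfl⟩)

lemma vertAdj'' (v : Fin 4) (i : Fin (m+4)) :
    (cycleGraph 4 □ cycleGraph (m+4)).Adj (v, i + 1) (v, i) :=
  (vertAdj' v i).symm

variable {S : Set (Fin 4 × Fin (m + 4))}

lemma ind_adj {x y : Fin 4 × Fin (m+4)} (hx : x ∈ Sᶜ) (hy : y ∈ Sᶜ)
    (h : (cycleGraph 4 □ cycleGraph (m+4)).Adj x y) :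
    ((cycleGraph 4 □ cycleGraph (m+4)).induce Sᶜ).Adj ⟨x, hx⟩ ⟨y, hy⟩ := h

lemma col_cycle (j : Fin (m+4)) (h : ∀ v, (v, j) ∉ S) :
    ¬ ((cycleGraph 4 □ cycleGraph (m+4)).induce Sᶜ).IsAcyclic := by
  refine quad_not_acyclic (a := ⟨(0, j), h 0⟩) (b := ⟨(1, j), h 1⟩)
    (c := ⟨(2, j), h 2⟩) (d := ⟨(3, j), h 3⟩)
    (ind_adj _ _ (horizAdj (by decide) j)) (ind_adj _ _ (horizAdj (by decide) j))
    (ind_adj _ _ (horizAdj (by decide) j)) (ind_adj _ _ (horizAdj (by decide) j)) ?_ ?_ <;>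
  · simp [Subtype.ext_iff, Prod.ext_iff]

lemma ne_fst {x y : Fin 4 × Fin (m+4)} {hx : x ∈ Sᶜ} {hy : y ∈ Sᶜ} (h : x.1 ≠ y.1) :
    (⟨x, hx⟩ : ↥Sᶜ) ≠ ⟨y, hy⟩ := by
  simp only [ne_eq, Subtype.mk.injEq]
  exact fun he => h (congrArg Prod.fst he)

lemma ne_snd {x y : Fin 4 × Fin (m+4)} {hx : x ∈ Sᶜ} {hy : y ∈ Sᶜ} (h : x.2 ≠ y.2) :
    (⟨x, hx⟩ : ↥Sᶜ) ≠ ⟨y, hy⟩ := by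
  simp only [ne_eq, Subtype.mk.injEq]
  exact fun he => h (congrArg Prod.snd he)

lemma two_col_0 (i : Fin (m+4)) (a : Fin 4)
    (hi : ∀ v, v ≠ a → (v, i) ∉ S) (hj : ∀ v, v ≠ a → (v, i + 1) ∉ S) :
    ¬ ((cycleGraph 4 □ cycleGraph (m+4)).induce Sᶜ).IsAcyclic := by
  have hii := (vertAdj (m := m) i).ne
  refine quad_not_acyclic
    (a := ⟨(a+1, i), hi _ ((by decide : ∀ a : Fin 4, a+1 ≠ a) a)⟩)
    (b := ⟨(a+2, i), hi _ ((by decide : ∀ a : Fin 4, a+2 ≠ a) a)⟩)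
    (c := ⟨(a+2, i+1), hj _ ((by decide : ∀ a : Fin 4, a+2 ≠ a) a)⟩)
    (d := ⟨(a+1, i+1), hj _ ((by decide : ∀ a : Fin 4, a+1 ≠ a) a)⟩)
    (ind_adj _ _ (horizAdj ((by decide : ∀ a : Fin 4, (cycleGraph 4).Adj (a+1) (a+2)) a) i))
    (ind_adj _ _ (vertAdj' _ i))
    (ind_adj _ _ (horizAdj ((by decide : ∀ a : Fin 4, (cycleGraph 4).Adj (a+2) (a+1)) a) (i+1)))
    (ind_adj _ _ (vertAdj'' _ i))
    (ne_snd hii) (ne_snd hii)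

lemma two_col_1 (i : Fin (m+4)) (a : Fin 4)
    (hi : ∀ v, v ≠ a → (v, i) ∉ S) (hj : ∀ v, v ≠ a + 1 → (v, i + 1) ∉ S) :
    ¬ ((cycleGraph 4 □ cycleGraph (m+4)).induce Sᶜ).IsAcyclic := by
  have hii := (vertAdj (m := m) i).ne
  refine quad_not_acyclic
    (a := ⟨(a+2, i), hi _ ((by decide : ∀ a : Fin 4, a+2 ≠ a) a)⟩)
    (b := ⟨(a+3, i), hi _ ((by decide : ∀ a : Fin 4, a+3 ≠ a) a)⟩)
    (c := ⟨(a+3, i+1), hj _ ((by decide : ∀ a : Fin 4, a+3 ≠ a+1) a)⟩)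
    (d := ⟨(a+2, i+1), hj _ ((by decide : ∀ a : Fin 4, a+2 ≠ a+1) a)⟩)
    (ind_adj _ _ (horizAdj ((by decide : ∀ a : Fin 4, (cycleGraph 4).Adj (a+2) (a+3)) a) i))
    (ind_adj _ _ (vertAdj' _ i))
    (ind_adj _ _ (horizAdj ((by decide : ∀ a : Fin 4, (cycleGraph 4).Adj (a+3) (a+2)) a) (i+1)))
    (ind_adj _ _ (vertAdj'' _ i))
    (ne_snd hii) (ne_snd hii)

lemma two_col_3 (i : Fin (m+4)) (a : Fin 4)
    (hi : ∀ v, v ≠ a → (v, i) ∉ S) (hj : ∀ v, v ≠ a + 3 → (v, i + 1) ∉ S) :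
    ¬ ((cycleGraph 4 □ cycleGraph (m+4)).induce Sᶜ).IsAcyclic := by
  have hii := (vertAdj (m := m) i).ne
  refine quad_not_acyclic
    (a := ⟨(a+1, i), hi _ ((by decide : ∀ a : Fin 4, a+1 ≠ a) a)⟩)
    (b := ⟨(a+2, i), hi _ ((by decide : ∀ a : Fin 4, a+2 ≠ a) a)⟩)
    (c := ⟨(a+2, i+1), hj _ ((by decide : ∀ a : Fin 4, a+2 ≠ a+3) a)⟩)
    (d := ⟨(a+1, i+1), hj _ ((by decide : ∀ a : Fin 4, a+1 ≠ a+3) a)⟩)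
    (ind_adj _ _ (horizAdj ((by decide : ∀ a : Fin 4, (cycleGraph 4).Adj (a+1) (a+2)) a) i))
    (ind_adj _ _ (vertAdj' _ i))
    (ind_adj _ _ (horizAdj ((by decide : ∀ a : Fin 4, (cycleGraph 4).Adj (a+2) (a+1)) a) (i+1)))
    (ind_adj _ _ (vertAdj'' _ i))
    (ne_snd hii) (ne_snd hii)

lemma two_col_2 (i : Fin (m+4)) (a : Fin 4)
    (hi : ∀ v, v ≠ a → (v, i) ∉ S) (hj : ∀ v, v ≠ a + 2 → (v, i + 1) ∉ S) :
    ¬ ((cycleGraph 4 □ cycleGraph (m+4)).induce Sᶜ).IsAcyclic := by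
  have hii := (vertAdj (m := m) i).ne
  refine hex_not_acyclic
    (a := ⟨(a+3, i), hi _ ((by decide : ∀ a : Fin 4, a+3 ≠ a) a)⟩)
    (b := ⟨(a+2, i), hi _ ((by decide : ∀ a : Fin 4, a+2 ≠ a) a)⟩)
    (c := ⟨(a+1, i), hi _ ((by decide : ∀ a : Fin 4, a+1 ≠ a) a)⟩)
    (d := ⟨(a+1, i+1), hj _ ((by decide : ∀ a : Fin 4, a+1 ≠ a+2) a)⟩)
    (e := ⟨(a, i+1), hj _ ((by decide : ∀ a : Fin 4, a ≠ a+2) a)⟩)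
    (f := ⟨(a+3, i+1), hj _ ((by decide : ∀ a : Fin 4, a+3 ≠ a+2) a)⟩)
    (ind_adj _ _ (horizAdj ((by decide : ∀ a : Fin 4, (cycleGraph 4).Adj (a+3) (a+2)) a) i))
    (ind_adj _ _ (horizAdj ((by decide : ∀ a : Fin 4, (cycleGraph 4).Adj (a+2) (a+1)) a) i))
    (ind_adj _ _ (vertAdj' _ i))
    (ind_adj _ _ (horizAdj ((by decide : ∀ a : Fin 4, (cycleGraph 4).Adj (a+1) a) a) (i+1)))
    (ind_adj _ _ (horizAdj ((by decide : ∀ a : Fin 4, (cycleGraph 4).Adj a (a+3)) a) (i+1)))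
    (ind_adj _ _ (vertAdj'' _ i))
    (ne_fst ((by decide : ∀ a : Fin 4, a+3 ≠ a+1) a)) (ne_snd hii) (ne_snd hii)
    (ne_snd hii) (ne_snd hii) (ne_snd hii)
    (ne_snd hii) (ne_snd hii) (ne_fst ((by decide : ∀ a : Fin 4, a+1 ≠ a+3) a))

open Finset in
lemma filter_zero {j : Fin (m+4)} [DecidablePred (· ∈ S)]
    (h : (univ.filter fun v : Fin 4 => (v, j) ∈ S).card = 0) : ∀ v, (v, j) ∉ S := fun v hv =>
  Finset.filter_eq_empty_iff.mp (Finset.card_eq_zero.mp h) (mem_univ v) hv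

open Finset in
lemma filter_one {j : Fin (m+4)} [DecidablePred (· ∈ S)]
    (h : (univ.filter fun v : Fin 4 => (v, j) ∈ S).card = 1) :
    ∃ a : Fin 4, ∀ v, v ≠ a → (v, j) ∉ S := by
  obtain ⟨a, ha⟩ := Finset.card_eq_one.mp h
  exact ⟨a, fun v hv hvS => hv (mem_singleton.mp (ha ▸ mem_filter.mpr ⟨mem_univ v, hvS⟩))⟩

open Finset in
lemma key_pair [DecidablePred (· ∈ S)]
    (hS : (cycleGraph 4 □ cycleGraph (m+4)).IsDecyclingSet S) (i : Fin (m+4)) :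
    3 ≤ (univ.filter fun v : Fin 4 => (v, i) ∈ S).card
      + (univ.filter fun v : Fin 4 => (v, i + 1) ∈ S).card := by
  by_contra h
  push_neg at h
  rcases Nat.eq_zero_or_pos (univ.filter fun v : Fin 4 => (v, i) ∈ S).card with h1 | h1
  · exact col_cycle i (filter_zero h1) hS
  rcases Nat.eq_zero_or_pos (univ.filter fun v : Fin 4 => (v, i + 1) ∈ S).card with h2 | h2
  · exact col_cycle (i+1) (filter_zero h2) hS
  obtain ⟨a, ha⟩ := filter_one (S := S) (j := i) (by omega)
  obtain ⟨b, hb⟩ := filter_one (S := S) (j := i + 1) (by omega)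
  rcases (by decide : ∀ a b : Fin 4, b = a ∨ b = a + 1 ∨ b = a + 2 ∨ b = a + 3) a b
    with rfl | rfl | rfl | rfl
  · exact two_col_0 i b ha hb hS
  · exact two_col_1 i a ha hb hS
  · exact two_col_2 i a ha hb hS
  · exact two_col_3 i a ha hb hS

open Finset in
lemma main_bound (S : Set (Fin 4 × Fin (m+4)))
    (hS : (cycleGraph 4 □ cycleGraph (m+4)).IsDecyclingSet S) :
    ⌈(3 * (m+4) : ℚ) / 2⌉₊ ≤ S.ncard := by
  classical
  have hT : S.ncard = (S.toFinite.toFinset).card := Set.ncard_eq_toFinset_card S S.toFinite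
  set T := S.toFinite.toFinset with hTdef
  have hfib : ∀ i : Fin (m+4), (T.filter fun p => p.2 = i).card
      = (univ.filter fun v : Fin 4 => (v, i) ∈ S).card := by
    intro i
    refine Finset.card_bij (fun p _ => p.1) ?_ ?_ ?_
    · intro p hp
      simp only [mem_filter, Set.Finite.mem_toFinset, hTdef] at hp ⊢
      exact ⟨mem_univ _, by rw [← hp.2]; exact hp.1⟩
    · intro p hp q hq h
      simp only [mem_filter, Set.Finite.mem_toFinset, hTdef] at hp hq
      exact Prod.ext h (hp.2.trans hq.2.symm)
    · intro v hv
      simp only [mem_filter, Set.Finite.mem_toFinset, hTdef] at hv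
      exact ⟨(v, i), mem_filter.mpr ⟨S.toFinite.mem_toFinset.mpr hv.2, rfl⟩, rfl⟩
  have hsum : T.card = ∑ i : Fin (m+4), (univ.filter fun v : Fin 4 => (v, i) ∈ S).card := by
    rw [Finset.card_eq_sum_card_fiberwise (f := Prod.snd) (fun x _ => mem_univ x.2)]
    exact Finset.sum_congr rfl fun i _ => hfib i
  set g : Fin (m+4) → ℕ := fun i => (univ.filter fun v : Fin 4 => (v, i) ∈ S).card with hg
  have hshift : ∑ i : Fin (m+4), g (i + 1) = ∑ i : Fin (m+4), g i :=
    Fintype.sum_equiv (Equiv.addRight 1) _ _ (fun i => rfl)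
  have hkey : ∑ _i : Fin (m+4), 3 ≤ ∑ i : Fin (m+4), (g i + g (i + 1)) :=
    Finset.sum_le_sum fun i _ => key_pair hS i
  rw [Finset.sum_add_distrib, hshift, Finset.sum_const, card_univ, Fintype.card_fin,
    smul_eq_mul] at hkey
  have h2 : 3 * (m + 4) ≤ 2 * S.ncard := by
    rw [hT, hsum]
    calc 3 * (m + 4) = (m + 4) * 3 := by ring
      _ ≤ (∑ i : Fin (m+4), g i) + (∑ i : Fin (m+4), g i) := hkey
      _ = 2 * ∑ i : Fin (m+4), g i := by ring
  rw [Nat.ceil_le, div_le_iff₀ (by norm_num : (0:ℚ) < 2)]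
  push_cast
  rw [mul_comm (S.ncard : ℚ) 2]
  exact_mod_cast h2

/-- For every `n ≥ 4`, every decycling set of `C₄ □ Cₙ` has cardinality at least `⌈3n/2⌉`;
that is, `∇(C₄ □ Cₙ) ≥ ⌈3n/2⌉`. -/
theorem decyclingNumber_C4_boxProd_Cn_ge (n : ℕ) (hn : 4 ≤ n) :
    (∀ S : Set (Fin 4 × Fin n), (cycleGraph 4 □ cycleGraph n).IsDecyclingSet S →
        ⌈(3 * n : ℚ) / 2⌉₊ ≤ S.ncard) ∧
      ⌈(3 * n : ℚ) / 2⌉₊ ≤ (cycleGraph 4 □ cycleGraph n).decyclingNumber := by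
  obtain ⟨m, rfl⟩ : ∃ m, n = m + 4 := ⟨n - 4, by omega⟩
  have h1 : ∀ S : Set (Fin 4 × Fin (m+4)),
      (cycleGraph 4 □ cycleGraph (m+4)).IsDecyclingSet S →
      ⌈(3 * (m+4) : ℚ) / 2⌉₊ ≤ S.ncard := by
    intro S hS
    exact_mod_cast main_bound S hS
  refine ⟨by exact_mod_cast h1, ?_⟩
  have hne : {k | ∃ S : Set (Fin 4 × Fin (m+4)),
      (cycleGraph 4 □ cycleGraph (m+4)).IsDecyclingSet S ∧ S.ncard = k}.Nonempty := by
    refine ⟨(Set.univ : Set (Fin 4 × Fin (m+4))).ncard, Set.univ, ?_, rfl⟩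
    intro v c hc
    exact v.2 (Set.mem_univ v.1)
  obtain ⟨S, hS, hcard⟩ := Nat.sInf_mem hne
  rw [SimpleGraph.decyclingNumber, ← hcard]
  exact_mod_cast h1 S hS
end

section
/- For every n ≥ 4 with n ≡ 1 (mod 3), the decycling number of the square of the n-cycle equals (n+2)/3: ∇(Cₙ²) = (n−1)/3 + 1 = ⌈(n+1)/3⌉. -/
open SimpleGraph

/-- The square `Cₙ²` of the `n`-cycle: vertex set `ZMod n`, with `i` adjacent to `j` iff
`i ≠ j` and `i - j ≡ ±1` or `±2 (mod n)`. -/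
def cycleSquare (n : ℕ) : SimpleGraph (ZMod n) where
  Adj i j := i ≠ j ∧ (i - j = 1 ∨ j - i = 1 ∨ i - j = 2 ∨ j - i = 2)
  symm := by constructor; intro i j ⟨h, hd⟩; exact ⟨h.symm, by tauto⟩
  loopless := by constructor; intro i ⟨h, _⟩; exact h rfl

/-!
Any three consecutive vertices of `Cₙ²` form a triangle, so a decycling set meets each of the
`n` windows `{i, i + 1, i + 2}` and therefore has at least `n / 3` elements; for `n = 3m + 1`
that is at least `m + 1`. Conversely, deleting the `m + 1` vertices `0, 3, …, 3m` leaves the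
path `1 – 2 – 4 – 5 – ⋯ – (3m - 2) – (3m - 1)`.
-/

namespace SimpleGraph

theorem isAcyclic_hasse (α : Type*) [LinearOrder α] : (hasse α).IsAcyclic := by
  intro v c hc
  set u := c.support.toFinset.max' ⟨v, by simp⟩
  have hu : u ∈ c.support := List.mem_toFinset.mp (Finset.max'_mem _ _)
  have hc' : (c.rotate u hu).IsCycle := hc.rotate hu
  -- Both cycle-neighbours of the largest vertex `u` are covered by `u`, hence equal.
  have hcov : ∀ w ∈ (c.rotate u hu).support, (hasse α).Adj u w → w ⋖ u := fun w hw hadj =>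
    (hasse_adj.mp hadj).resolve_left fun h => (Finset.le_max' _ w
      (List.mem_toFinset.mpr ((c.mem_support_rotate_iff u hu).mp hw))).not_gt h.lt
  exact hc'.snd_ne_penultimate <| CovBy.unique_left
    (hcov _ (Walk.getVert_mem_support _ _) (Walk.adj_snd hc'.not_nil))
    (hcov _ (Walk.getVert_mem_support _ _) (Walk.adj_penultimate hc'.not_nil).symm)

variable {V : Type*} {G : SimpleGraph V} {S : Set V}

theorem IsDecyclingSet.mem_or_mem_or_mem {a b c : V} (hS : G.IsDecyclingSet S)
    (hab : G.Adj a b) (hac : G.Adj a c) (hbc : G.Adj b c) : a ∈ S ∨ b ∈ S ∨ c ∈ S := by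
  classical
  by_contra! ⟨ha, hb, hc⟩
  have htriangle : (G.induce Sᶜ).IsNClique 3 {⟨a, ha⟩, ⟨b, hb⟩, ⟨c, hc⟩} :=
    is3Clique_triple_iff.mpr ⟨hab, hac, hbc⟩
  exact hS.cliqueFree le_rfl _ htriangle

theorem decyclingNumber_eq_of_isDecyclingSet (hS : G.IsDecyclingSet S)
    (hmin : ∀ T, G.IsDecyclingSet T → S.ncard ≤ T.ncard) : G.decyclingNumber = S.ncard :=
  le_antisymm (Nat.sInf_le ⟨S, hS, rfl⟩)
    (le_csInf ⟨_, S, hS, rfl⟩ fun _ ⟨T, hT, hk⟩ => hk ▸ hmin T hT)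

end SimpleGraph

open Finset Pointwise in
theorem Fintype.card_le_card_mul_of_forall_exists_add_mem {G : Type*} [AddGroup G] [Fintype G]
    [DecidableEq G] {T W : Finset G} (h : ∀ i, ∃ w ∈ W, i + w ∈ T) :
    Fintype.card G ≤ #T * #W :=
  calc Fintype.card G = #(univ : Finset G) := card_univ.symm
    _ ≤ #(T - W) := card_le_card fun i _ => by
        obtain ⟨w, hw, hiw⟩ := h i
        exact mem_sub.mpr ⟨_, hiw, w, hw, add_sub_cancel_right i w⟩
    _ ≤ #T * #W := card_sub_le

theorem ZMod.natCast_ne_zero_of_pos_of_lt {n k : ℕ} (hk : 0 < k) (hkn : k < n) :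
    (k : ZMod n) ≠ 0 := by
  rw [Ne, ZMod.natCast_eq_zero_iff]
  exact Nat.not_dvd_of_pos_of_lt hk hkn

theorem ZMod.val_add_eq_or {n : ℕ} [NeZero n] (a b : ZMod n) :
    (a + b).val = a.val + b.val ∨ (a + b).val + n = a.val + b.val := by
  rcases lt_or_ge (a.val + b.val) n with h | h
  · exact .inl (val_add_of_lt h)
  · exact .inr (val_add_val_of_le h).symm

theorem ZMod.val_eq_or_of_sub_eq {n c : ℕ} [NeZero n] {a b : ZMod n} (h : a - b = c)
    (hc : c < n) : a.val = b.val + c ∨ a.val + n = b.val + c := by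
  rw [sub_eq_iff_eq_add] at h
  subst h
  have := ZMod.val_add_eq_or (c : ZMod n) b
  rw [ZMod.val_natCast_of_lt hc] at this
  omega

theorem cycleSquare_adj_add_one {n : ℕ} (hn : 3 ≤ n) (i : ZMod n) :
    (cycleSquare n).Adj i (i + 1) :=
  ⟨by simpa using (ZMod.natCast_ne_zero_of_pos_of_lt one_pos (by omega) : ((1 : ℕ) : ZMod n) ≠ 0),
    .inr <| .inl <| by ring⟩

theorem cycleSquare_adj_add_two {n : ℕ} (hn : 3 ≤ n) (i : ZMod n) :
    (cycleSquare n).Adj i (i + 2) :=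
  ⟨by simpa using (ZMod.natCast_ne_zero_of_pos_of_lt two_pos (by omega) : ((2 : ℕ) : ZMod n) ≠ 0),
    .inr <| .inr <| .inr <| by ring⟩

theorem le_three_mul_ncard_of_isDecyclingSet {n : ℕ} (hn : 3 ≤ n) {T : Set (ZMod n)}
    (hT : (cycleSquare n).IsDecyclingSet T) : n ≤ 3 * T.ncard := by
  classical
  have : NeZero n := ⟨by omega⟩
  have hwindow : ∀ i : ZMod n, ∃ w ∈ ({0, 1, 2} : Finset (ZMod n)), i + w ∈ T.toFinset := by
    intro i
    have h12 : (cycleSquare n).Adj (i + 1) (i + 2) := by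
      simpa [add_assoc, one_add_one_eq_two] using cycleSquare_adj_add_one hn (i + 1)
    rcases hT.mem_or_mem_or_mem (cycleSquare_adj_add_one hn i) (cycleSquare_adj_add_two hn i)
      h12 with h | h | h <;> simp [h]
  calc n = Fintype.card (ZMod n) := (ZMod.card n).symm
    _ ≤ T.toFinset.card * ({0, 1, 2} : Finset (ZMod n)).card :=
        Fintype.card_le_card_mul_of_forall_exists_add_mem hwindow
    _ ≤ 3 * T.ncard := by
        rw [Set.ncard_eq_toFinset_card', mul_comm]
        exact Nat.mul_le_mul_right _ Finset.card_le_three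

theorem cycleSquare_isDecyclingSet_of_forall_val_mod_three (m : ℕ) {S : Set (ZMod (3 * m + 1))}
    (hS : ∀ x : ZMod (3 * m + 1), x.val % 3 = 0 → x ∈ S) :
    (cycleSquare (3 * m + 1)).IsDecyclingSet S := by
  have hval : ∀ x : ↥Sᶜ, (x : ZMod (3 * m + 1)).val % 3 ≠ 0 := fun x h => x.2 (hS _ h)
  have hlt : ∀ x : ↥Sᶜ, (x : ZMod (3 * m + 1)).val < 3 * m + 1 := fun x => ZMod.val_lt _
  -- Off the multiples of 3, `x ↦ x - ⌊x / 3⌋` numbers `1, 2, 4, 5, …, 3m - 1` consecutively;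
  -- the edges through `0` all end at `0` or `3m`, which lie in `S`.
  let height : (cycleSquare (3 * m + 1)).induce Sᶜ →g hasse ℕ :=
    { toFun x := x.1.val - x.1.val / 3
      map_rel' {a b} hab := by
        obtain ⟨-, hd⟩ := hab
        have := hval a; have := hval b; have := hlt a; have := hlt b
        rw [hasse_adj, Nat.covBy_iff_add_one_eq, Nat.covBy_iff_add_one_eq]
        rcases hd with h | h | h | h
        · rcases ZMod.val_eq_or_of_sub_eq (c := 1) (by simpa using h) (by omega) with h | h <;>
            omega
        · rcases ZMod.val_eq_or_of_sub_eq (c := 1) (by simpa using h) (by omega) with h | h <;>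
            omega
        · rcases ZMod.val_eq_or_of_sub_eq (c := 2) (by simpa using h) (by omega) with h | h <;>
            omega
        · rcases ZMod.val_eq_or_of_sub_eq (c := 2) (by simpa using h) (by omega) with h | h <;>
            omega }
  refine IsAcyclic.comap height (fun a b hheight => ?_) (isAcyclic_hasse ℕ)
  have := hval a; have := hval b
  have hheight : (a : ZMod (3 * m + 1)).val - (a : ZMod (3 * m + 1)).val / 3 =
      (b : ZMod (3 * m + 1)).val - (b : ZMod (3 * m + 1)).val / 3 := hheight
  exact Subtype.ext (ZMod.val_injective _ (by omega))

theorem exists_isDecyclingSet_cycleSquare_ncard_eq (m : ℕ) :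
    ∃ S : Set (ZMod (3 * m + 1)),
      (cycleSquare (3 * m + 1)).IsDecyclingSet S ∧ S.ncard = m + 1 := by
  let threeMul : Fin (m + 1) → ZMod (3 * m + 1) := fun k => ((3 * k.val : ℕ) : ZMod (3 * m + 1))
  have hval : ∀ k, (threeMul k).val = 3 * k.val := fun k => ZMod.val_natCast_of_lt (by omega)
  refine ⟨Set.range threeMul, cycleSquare_isDecyclingSet_of_forall_val_mod_three m
    fun x hx => ⟨⟨x.val / 3, ?_⟩, ZMod.val_injective _ ?_⟩, ?_⟩
  · have := ZMod.val_lt x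
    omega
  · rw [hval, Fin.val_mk]
    omega
  · rw [Set.ncard_range_of_injective, Nat.card_eq_fintype_card, Fintype.card_fin]
    intro k l hkl
    have := congrArg ZMod.val hkl
    rw [hval, hval] at this
    exact Fin.ext (by omega)

theorem Nat.ceil_natCast_three_mul_add_two_div_three {K : Type*} [Field K] [LinearOrder K]
    [IsStrictOrderedRing K] [FloorSemiring K] (m : ℕ) :
    ⌈(((3 * m + 1 : ℕ) : K) + 1) / 3⌉₊ = m + 1 := by
  rw [Nat.ceil_eq_iff (by omega), Nat.add_sub_cancel, lt_div_iff₀ three_pos,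
    div_le_iff₀ three_pos]
  push_cast
  constructor <;> linarith

/-- For every `n ≥ 4` with `n ≡ 1 (mod 3)`, `∇(Cₙ²) = (n−1)/3 + 1 = ⌈(n+1)/3⌉`. -/
theorem decyclingNumber_cycleSquare_one_mod_three (n : ℕ) (hn : 4 ≤ n) (h3 : n % 3 = 1) :
    (cycleSquare n).decyclingNumber = (n - 1) / 3 + 1 ∧
      (n - 1) / 3 + 1 = ⌈((n : ℚ) + 1) / 3⌉₊ := by
  obtain ⟨m, rfl⟩ : ∃ m, n = 3 * m + 1 := ⟨n / 3, by omega⟩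
  rw [show (3 * m + 1 - 1) / 3 + 1 = m + 1 by omega, Nat.ceil_natCast_three_mul_add_two_div_three]
  refine ⟨?_, rfl⟩
  obtain ⟨S, hS, hcard⟩ := exists_isDecyclingSet_cycleSquare_ncard_eq m
  rw [← hcard]
  refine decyclingNumber_eq_of_isDecyclingSet hS fun T hT => ?_
  have := le_three_mul_ncard_of_isDecyclingSet (by omega) hT
  omega
end
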